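/- With notation as in Lemma 4.1 of the paper, the characters (λ, μ) ↦ ϱ^{λ,μ}(ω'_η ω_φ) on the group Λ × Λ, indexed by (η, φ) ∈ Q × Q, are pairwise distinct: if ϱ^{λ,μ}(ω'_η ω_φ) = ϱ^{λ,μ}(ω'_ζ ω_ψ) for all (λ, μ) ∈ Λ × Λ, then (η, φ) = (ζ, ψ). -/

import Mathlib

open Finset

/-- Complex power with a rational exponent (principal branch). -/
noncomputable def zq (z : ℂ) (q : ℚ) : ℂ := z ^ (q : ℂ)

/-- `(ε_j, λ)` for `λ = Σ λ_i ϖ_i` in the weight lattice of `so_{2n+1}`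
(`ϖ_i = ε_1 + ⋯ + ε_i` for `i < n`, `ϖ_n = (ε_1 + ⋯ + ε_n)/2`; 0-indexed,
rank `n+1`). -/
def epsW {n : ℕ} (lam : Fin (n+1) → ℤ) (j : Fin (n+1)) : ℚ :=
  (∑ i ∈ univ.filter (fun i => j ≤ i ∧ i ≠ Fin.last n), (lam i : ℚ))
    + (lam (Fin.last n) : ℚ) / 2

/-- The coefficient of `α_j` when the weight `λ` is written in the simple-root
basis: `c_j = Σ_{k ≤ j} (ε_k, λ)`. -/
def alphaCoordW {n : ℕ} (lam : Fin (n+1) → ℤ) (j : Fin (n+1)) : ℚ :=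
  ∑ i ∈ univ.filter (· ≤ j), epsW lam i

/-- `(ε_i, ζ)` for `ζ = Σ ζ_j α_j` in the root lattice of `B_{n+1}`. -/
def epsQ {n : ℕ} (ζ : Fin (n+1) → ℤ) (i : Fin (n+1)) : ℤ :=
  ζ i - (if h : 0 < (i : ℕ) then ζ ⟨(i : ℕ) - 1, by omega⟩ else 0)

/-- The pairing value `⟨ω'_ζ, ω_i⟩` for `ζ` in the root lattice. -/
noncomputable def pgQ (r s : ℂ) {n : ℕ} (ζ : Fin (n+1) → ℤ) (i : Fin (n+1)) : ℂ :=
  if h : (i : ℕ) + 1 < n + 1 then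
    r ^ (2 * epsQ ζ i) * s ^ (2 * epsQ ζ ⟨(i : ℕ) + 1, h⟩)
  else
    r ^ (2 * epsQ ζ i) * (r * s) ^ (-(ζ i))

/-- The pairing value `⟨ω'_λ, ω_i⟩` for `λ` in the weight lattice. -/
noncomputable def pgW (r s : ℂ) {n : ℕ} (lam : Fin (n+1) → ℤ) (i : Fin (n+1)) : ℂ :=
  if i ≠ Fin.last n then
    zq r (2 * epsW lam i) * zq s (2 * epsW lam (i + 1))
  else
    zq r (2 * epsW lam i) * zq (r * s) (-(alphaCoordW lam (Fin.last n)))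

/-- `⟨ω'_η, ω_λ⟩` for `η` in the root lattice and `λ` a weight, extended
bimultiplicatively. -/
noncomputable def pairQW (r s : ℂ) {n : ℕ} (η : Fin (n+1) → ℤ)
    (lam : Fin (n+1) → ℤ) : ℂ :=
  ∏ i : Fin (n+1), zq (pgQ r s η i) (alphaCoordW lam i)

/-- `⟨ω'_λ, ω_φ⟩` for `λ` a weight and `φ` in the root lattice. -/
noncomputable def pairWQ (r s : ℂ) {n : ℕ} (lam : Fin (n+1) → ℤ)
    (φ : Fin (n+1) → ℤ) : ℂ :=
  ∏ i : Fin (n+1), (pgW r s lam i) ^ (φ i)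

/-- `ϱ^{λ,0}(ω'_η ω_φ) = ϱ^λ(ω'_η ω_φ) = ⟨ω'_η, ω_λ⟩⁻¹ ⟨ω'_λ, ω_φ⟩`. -/
noncomputable def rhoLam (r s : ℂ) {n : ℕ} (lam η φ : Fin (n+1) → ℤ) : ℂ :=
  (pairQW r s η lam)⁻¹ * pairWQ r s lam φ

/-- The inner product `(η, μ)` of `η = Σ η_i α_i` in the root lattice with
`μ = Σ μ_i ϖ_i` in the weight lattice: `(α_i, ϖ_i) = (α_i,α_i)/2`. -/
def ipQW {n : ℕ} (η μ : Fin (n+1) → ℤ) : ℚ :=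
  ∑ i : Fin (n+1), (η i : ℚ) * (μ i : ℚ) * (if i ≠ Fin.last n then 1 else 1/2)

/-- `ϱ^{λ,μ}(ω'_η ω_φ) = ϱ^λ(ω'_η ω_φ) · (rs⁻¹)^{(η+φ,μ)}`. -/
noncomputable def rhoLM (r s : ℂ) {n : ℕ} (lam μ η φ : Fin (n+1) → ℤ) : ℂ :=
  rhoLam r s lam η φ * zq (r * s⁻¹) (ipQW (η + φ) μ)


/-!
Taking `λ = 0` and `μ = 2ϖ_j` leaves only the factor `(rs⁻¹)^{(η+φ, μ)}`, so `η + φ = ζ + ψ`;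
put `d = ζ - η = φ - ψ`. For a weight `λ` in the root lattice, `ϱ^λ(ω'_χ ω_σ)` is
`⟨ω'_χ, ω_λ⟩⁻¹ ⟨ω'_λ, ω_σ⟩` for the bimultiplicative pairing on `Q × Q`, so taking `λ = d`,
`μ = 0` the hypothesis becomes `⟨ω'_d, ω_d⟩² = 1`. Summation by parts gives
`⟨ω'_d, ω_d⟩ = (rs⁻¹)^{Σ_i (ε_i, d)²}`, and since `r`, `s` are multiplicatively independent,
all `(ε_i, d)` vanish, i.e. `d = 0`.
-/

lemma zq_intCast (z : ℂ) (m : ℤ) : zq z m = z ^ m := by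
  rw [zq, Rat.cast_intCast, Complex.cpow_intCast]

lemma zpow_sum₀ {ι G₀ : Type*} [CommGroupWithZero G₀] {a : G₀} (ha : a ≠ 0)
    (t : Finset ι) (f : ι → ℤ) : a ^ (∑ i ∈ t, f i) = ∏ i ∈ t, a ^ f i := by
  classical
  induction t using Finset.induction_on with
  | empty => simp
  | insert i t hi ih => rw [sum_insert hi, prod_insert hi, zpow_add₀ ha, ih]

lemma Fin.sum_succ_sub_castSucc {M : Type*} [AddCommGroup M] {n : ℕ} (f : Fin (n + 1) → M) :
    ∑ i : Fin n, (f i.succ - f i.castSucc) = f (Fin.last n) - f 0 := by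
  have h := Fin.sum_univ_castSucc f
  rw [Fin.sum_univ_succ] at h
  rw [sum_sub_distrib, sub_eq_sub_iff_add_eq_add, add_comm, h, add_comm]

section RootLattice

variable {n : ℕ}

lemma epsQ_apply_zero (ζ : Fin (n+1) → ℤ) : epsQ ζ 0 = ζ 0 := by
  simp [epsQ]

lemma epsQ_apply_succ (ζ : Fin (n+1) → ℤ) (i : Fin n) :
    epsQ ζ i.succ = ζ i.succ - ζ i.castSucc := by
  rw [epsQ, dif_pos (Fin.val_succ i ▸ Nat.succ_pos i)]
  rfl

lemma epsQ_add (ζ ξ : Fin (n+1) → ℤ) (i : Fin (n+1)) :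
    epsQ (ζ + ξ) i = epsQ ζ i + epsQ ξ i := by
  unfold epsQ
  split_ifs <;> simp only [Pi.add_apply] <;> ring

lemma eq_zero_of_epsQ_eq_zero {ζ : Fin (n+1) → ℤ} (h : ∀ i, epsQ ζ i = 0) : ζ = 0 := by
  funext i
  induction i using Fin.induction with
  | zero => rw [← epsQ_apply_zero ζ, h, Pi.zero_apply]
  | succ i ih => simpa [epsQ_apply_succ, ih] using h i.succ

lemma pgQ_castSucc (r s : ℂ) (ζ : Fin (n+1) → ℤ) (i : Fin n) :
    pgQ r s ζ i.castSucc = r ^ (2 * epsQ ζ i.castSucc) * s ^ (2 * epsQ ζ i.succ) := by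
  rw [pgQ, dif_pos (by simp)]
  rfl

lemma pgQ_last {r : ℂ} (hr : r ≠ 0) (s : ℂ) (ζ : Fin (n+1) → ℤ) :
    pgQ r s ζ (Fin.last n) =
      r ^ (2 * epsQ ζ (Fin.last n) - ζ (Fin.last n)) * s ^ (-ζ (Fin.last n)) := by
  rw [pgQ, dif_neg (by simp), mul_zpow, zpow_sub₀ hr, zpow_neg, zpow_neg]
  ring

lemma pgQ_ne_zero {r s : ℂ} (hr : r ≠ 0) (hs : s ≠ 0) (ζ : Fin (n+1) → ℤ)
    (i : Fin (n+1)) :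
    pgQ r s ζ i ≠ 0 := by
  unfold pgQ
  split_ifs
  · exact mul_ne_zero (zpow_ne_zero _ hr) (zpow_ne_zero _ hs)
  · exact mul_ne_zero (zpow_ne_zero _ hr) (zpow_ne_zero _ (mul_ne_zero hr hs))

lemma pgQ_add {r s : ℂ} (hr : r ≠ 0) (hs : s ≠ 0) (ζ ξ : Fin (n+1) → ℤ)
    (i : Fin (n+1)) :
    pgQ r s (ζ + ξ) i = pgQ r s ζ i * pgQ r s ξ i := by
  unfold pgQ
  split_ifs
  · simp only [epsQ_add, mul_add, zpow_add₀ hr, zpow_add₀ hs]; ring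
  · simp only [epsQ_add, Pi.add_apply, mul_add, neg_add, zpow_add₀ hr,
      zpow_add₀ (mul_ne_zero hr hs)]; ring

/-- `⟨ω'_ζ, ω_τ⟩` for `ζ, τ` in the root lattice. -/
noncomputable def pairQQ (r s : ℂ) (ζ τ : Fin (n+1) → ℤ) : ℂ :=
  ∏ i, pgQ r s ζ i ^ τ i

lemma pairQQ_add_left {r s : ℂ} (hr : r ≠ 0) (hs : s ≠ 0) (ζ ξ τ : Fin (n+1) → ℤ) :
    pairQQ r s (ζ + ξ) τ = pairQQ r s ζ τ * pairQQ r s ξ τ := by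
  simp only [pairQQ, pgQ_add hr hs, mul_zpow, prod_mul_distrib]

lemma pairQQ_add_right {r s : ℂ} (hr : r ≠ 0) (hs : s ≠ 0) (ζ τ σ : Fin (n+1) → ℤ) :
    pairQQ r s ζ (τ + σ) = pairQQ r s ζ τ * pairQQ r s ζ σ := by
  simp only [pairQQ, Pi.add_apply, zpow_add₀ (pgQ_ne_zero hr hs _ _), prod_mul_distrib]

lemma pairQQ_ne_zero {r s : ℂ} (hr : r ≠ 0) (hs : s ≠ 0) (ζ τ : Fin (n+1) → ℤ) :
    pairQQ r s ζ τ ≠ 0 :=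
  prod_ne_zero_iff.2 fun i _ => zpow_ne_zero _ (pgQ_ne_zero hr hs ζ i)

lemma pairQQ_eq {r s : ℂ} (hr : r ≠ 0) (hs : s ≠ 0) (ζ τ : Fin (n+1) → ℤ) :
    pairQQ r s ζ τ =
      r ^ (∑ i, 2 * epsQ ζ i * τ i - ζ (Fin.last n) * τ (Fin.last n)) *
        s ^ (∑ i : Fin n, 2 * epsQ ζ i.succ * τ i.castSucc
          - ζ (Fin.last n) * τ (Fin.last n)) := by
  rw [pairQQ, Fin.prod_univ_castSucc, Fin.sum_univ_castSucc]
  simp only [pgQ_castSucc, pgQ_last hr, mul_zpow, ← zpow_mul, prod_mul_distrib,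
    ← zpow_sum₀ hr, ← zpow_sum₀ hs]
  rw [mul_mul_mul_comm, ← zpow_add₀ hr, ← zpow_add₀ hs]
  congr 2 <;> ring

lemma sum_epsQ_sq_eq_sum_mul_sub (d : Fin (n+1) → ℤ) :
    ∑ i, epsQ d i ^ 2 = ∑ i, 2 * epsQ d i * d i - d (Fin.last n) ^ 2 := by
  have tele : ∑ i : Fin n, (2 * (d i.succ - d i.castSucc) * d i.succ
      - (d i.succ - d i.castSucc) ^ 2) = d (Fin.last n) ^ 2 - d 0 ^ 2 := by
    rw [← Fin.sum_succ_sub_castSucc (fun i => d i ^ 2)]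
    exact sum_congr rfl fun i _ => by ring
  rw [sum_sub_distrib] at tele
  simp only [Fin.sum_univ_succ, epsQ_apply_zero, epsQ_apply_succ]
  linarith

lemma sum_epsQ_sq_eq_sub_sum_mul (d : Fin (n+1) → ℤ) :
    ∑ i, epsQ d i ^ 2 = d (Fin.last n) ^ 2 - ∑ i : Fin n, 2 * epsQ d i.succ * d i.castSucc := by
  have tele : ∑ i : Fin n, (2 * (d i.succ - d i.castSucc) * d i.castSucc
      + (d i.succ - d i.castSucc) ^ 2) = d (Fin.last n) ^ 2 - d 0 ^ 2 := by
    rw [← Fin.sum_succ_sub_castSucc (fun i => d i ^ 2)]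
    exact sum_congr rfl fun i _ => by ring
  rw [sum_add_distrib] at tele
  simp only [Fin.sum_univ_succ (f := fun i => epsQ d i ^ 2), epsQ_apply_zero, epsQ_apply_succ]
  linarith

lemma pairQQ_self {r s : ℂ} (hr : r ≠ 0) (hs : s ≠ 0) (d : Fin (n+1) → ℤ) :
    pairQQ r s d d = (r * s⁻¹) ^ ∑ i, epsQ d i ^ 2 := by
  rw [pairQQ_eq hr hs, mul_zpow, inv_zpow']
  congr 2
  · linear_combination -sum_epsQ_sq_eq_sum_mul_sub d
  · linear_combination sum_epsQ_sq_eq_sub_sum_mul d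

end RootLattice

section RootWeight

variable {n : ℕ}

lemma epsW_apply_castSucc (lam : Fin (n+1) → ℤ) (j : Fin n) :
    epsW lam j.castSucc = lam j.castSucc + epsW lam j.succ := by
  have hfilter : univ.filter (fun i : Fin (n+1) => j.castSucc ≤ i ∧ i ≠ Fin.last n)
      = insert j.castSucc (univ.filter (fun i => j.succ ≤ i ∧ i ≠ Fin.last n)) := by
    ext i
    simp only [mem_filter, mem_univ, true_and, mem_insert, Fin.le_iff_val_le_val, ne_eq,
      Fin.ext_iff, Fin.val_last, Fin.val_castSucc, Fin.val_succ]
    omega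
  rw [epsW, epsW, hfilter, sum_insert (by simp [Fin.le_iff_val_le_val])]
  ring

lemma epsW_apply_last (lam : Fin (n+1) → ℤ) :
    epsW lam (Fin.last n) = lam (Fin.last n) / 2 := by
  simp [epsW, Fin.last_le_iff]

lemma alphaCoordW_apply_zero (lam : Fin (n+1) → ℤ) : alphaCoordW lam 0 = epsW lam 0 := by
  simp [alphaCoordW, filter_eq']

lemma alphaCoordW_apply_succ (lam : Fin (n+1) → ℤ) (j : Fin n) :
    alphaCoordW lam j.succ = alphaCoordW lam j.castSucc + epsW lam j.succ := by
  have hfilter : univ.filter (· ≤ j.succ) = insert j.succ (univ.filter (· ≤ j.castSucc)) := by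
    ext i
    simp only [mem_filter, mem_univ, true_and, mem_insert, Fin.le_iff_val_le_val,
      Fin.ext_iff, Fin.val_castSucc, Fin.val_succ]
    omega
  rw [alphaCoordW, alphaCoordW, hfilter, sum_insert (by simp [Fin.le_iff_val_le_val]), add_comm]

/-- The coordinates of `τ ∈ Q` in the basis of fundamental weights. -/
def rootWeight (τ : Fin (n+1) → ℤ) : Fin (n+1) → ℤ :=
  fun i => if i = Fin.last n then 2 * epsQ τ i else epsQ τ i - epsQ τ (i + 1)

lemma epsW_rootWeight (τ : Fin (n+1) → ℤ) (j : Fin (n+1)) :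
    epsW (rootWeight τ) j = epsQ τ j := by
  induction j using Fin.reverseInduction with
  | last => simp [epsW_apply_last, rootWeight]
  | cast j ih =>
    rw [epsW_apply_castSucc, ih, rootWeight, if_neg (Fin.castSucc_lt_last j).ne,
      Fin.coeSucc_eq_succ]
    push_cast
    ring

lemma alphaCoordW_rootWeight (τ : Fin (n+1) → ℤ) (j : Fin (n+1)) :
    alphaCoordW (rootWeight τ) j = τ j := by
  induction j using Fin.induction with
  | zero => rw [alphaCoordW_apply_zero, epsW_rootWeight, epsQ_apply_zero]
  | succ j ih =>
    rw [alphaCoordW_apply_succ, ih, epsW_rootWeight, epsQ_apply_succ]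
    push_cast
    ring

lemma pgW_rootWeight (r s : ℂ) (τ : Fin (n+1) → ℤ) (i : Fin (n+1)) :
    pgW r s (rootWeight τ) i = pgQ r s τ i := by
  have two_mul_cast (m : ℤ) : (2 : ℚ) * m = ((2 * m : ℤ) : ℚ) := by push_cast; ring
  induction i using Fin.lastCases with
  | last =>
    rw [pgW, if_neg (not_not.2 rfl), pgQ, dif_neg (by simp), epsW_rootWeight,
      alphaCoordW_rootWeight, two_mul_cast, ← Int.cast_neg, zq_intCast, zq_intCast]
  | cast i =>
    rw [pgW, if_pos (Fin.castSucc_lt_last i).ne, pgQ_castSucc, Fin.coeSucc_eq_succ,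
      epsW_rootWeight, epsW_rootWeight, two_mul_cast, two_mul_cast, zq_intCast, zq_intCast]

lemma rhoLam_rootWeight (r s : ℂ) (τ χ σ : Fin (n+1) → ℤ) :
    rhoLam r s (rootWeight τ) χ σ = (pairQQ r s χ τ)⁻¹ * pairQQ r s τ σ := by
  simp only [rhoLam, pairQW, pairWQ, pairQQ, alphaCoordW_rootWeight, zq_intCast,
    pgW_rootWeight]

end RootWeight

section Characters

variable {n : ℕ}

lemma rhoLam_zero_left (r s : ℂ) (χ σ : Fin (n+1) → ℤ) : rhoLam r s 0 χ σ = 1 := by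
  simp [rhoLam, pairQW, pairWQ, pgW, epsW, alphaCoordW, zq]

lemma rhoLM_zero_right (r s : ℂ) (lam χ σ : Fin (n+1) → ℤ) :
    rhoLM r s lam 0 χ σ = rhoLam r s lam χ σ := by
  simp [rhoLM, ipQW, zq]

lemma ipQW_single_two (χ : Fin (n+1) → ℤ) (j : Fin (n+1)) :
    ipQW χ (Pi.single j 2) = ((χ j * if j = Fin.last n then 1 else 2 : ℤ) : ℚ) := by
  rw [ipQW, Fintype.sum_eq_single j fun i hi => by simp [hi]]
  by_cases hj : j = Fin.last n <;> simp [hj]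

lemma mul_inv_zpow_injective {r s : ℂ} (hr : r ≠ 0) (hs : s ≠ 0)
    (hrs : ∀ k l : ℤ, r ^ k * s ^ l = 1 → k = 0 ∧ l = 0) :
    Function.Injective fun k : ℤ => (r * s⁻¹) ^ k := by
  intro a b hab
  have ht : r * s⁻¹ ≠ 0 := mul_ne_zero hr (inv_ne_zero hs)
  have h : (r * s⁻¹) ^ (a - b) = 1 := by
    rw [zpow_sub₀ ht, div_eq_one_iff_eq (zpow_ne_zero _ ht)]
    exact hab
  rw [mul_zpow, inv_zpow'] at h
  have := hrs _ _ h
  omega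

lemma add_eq_add_of_rhoLM_eq {r s : ℂ} (hr : r ≠ 0) (hs : s ≠ 0)
    (hrs : ∀ k l : ℤ, r ^ k * s ^ l = 1 → k = 0 ∧ l = 0) {η φ ζ ψ : Fin (n+1) → ℤ}
    (h : ∀ μ, rhoLM r s 0 μ η φ = rhoLM r s 0 μ ζ ψ) : η + φ = ζ + ψ := by
  funext j
  have hj := h (Pi.single j 2)
  simp only [rhoLM, rhoLam_zero_left, one_mul, ipQW_single_two, zq_intCast] at hj
  have := mul_inv_zpow_injective hr hs hrs hj
  split_ifs at this <;> omega

lemma eq_zero_of_pairQQ_self_sq_eq_one {r s : ℂ} (hr : r ≠ 0) (hs : s ≠ 0)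
    (hrs : ∀ k l : ℤ, r ^ k * s ^ l = 1 → k = 0 ∧ l = 0) {d : Fin (n+1) → ℤ}
    (h : pairQQ r s d d ^ 2 = 1) : d = 0 := by
  rw [pairQQ_self hr hs, ← zpow_natCast, ← zpow_mul, ← zpow_zero (r * s⁻¹)] at h
  have hsum : ∑ i, epsQ d i ^ 2 = 0 := by
    have := mul_inv_zpow_injective hr hs hrs h
    omega
  refine eq_zero_of_epsQ_eq_zero fun i => pow_eq_zero_iff two_ne_zero |>.1 ?_
  exact (sum_eq_zero_iff_of_nonneg fun i _ => sq_nonneg _).1 hsum i (mem_univ i)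

lemma pairQQ_self_sq_eq_one_of_rhoLam_eq {r s : ℂ} (hr : r ≠ 0) (hs : s ≠ 0)
    {η ψ d : Fin (n+1) → ℤ}
    (h : rhoLam r s (rootWeight d) η (ψ + d) = rhoLam r s (rootWeight d) (η + d) ψ) :
    pairQQ r s d d ^ 2 = 1 := by
  rw [rhoLam_rootWeight, rhoLam_rootWeight, pairQQ_add_left hr hs, pairQQ_add_right hr hs] at h
  have hηd := pairQQ_ne_zero hr hs η d
  have hdψ := pairQQ_ne_zero hr hs d ψ
  have hdd := pairQQ_ne_zero hr hs d d
  field_simp at h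
  exact h

end Characters

/-- The characters `(λ, μ) ↦ ϱ^{λ,μ}(ω'_η ω_φ)` on `Λ × Λ`, indexed by
`(η, φ) ∈ Q × Q`, are pairwise distinct: if they agree for all `(λ, μ)`, then
`(η, φ) = (ζ, ψ)`. -/
theorem stmt5 (n : ℕ) (r s : ℂ) (hr : r ≠ 0) (hs : s ≠ 0)
    (hrs : ∀ k l : ℤ, r ^ k * s ^ l = 1 → k = 0 ∧ l = 0)
    (η φ ζ ψ : Fin (n+1) → ℤ)
    (h : ∀ lam μ : Fin (n+1) → ℤ, rhoLM r s lam μ η φ = rhoLM r s lam μ ζ ψ) :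
    η = ζ ∧ φ = ψ := by
  have hsum : η + φ = ζ + ψ := add_eq_add_of_rhoLM_eq hr hs hrs fun μ => h 0 μ
  obtain ⟨d, rfl⟩ : ∃ d, ζ = η + d := ⟨ζ - η, (add_sub_cancel η ζ).symm⟩
  obtain rfl : φ = ψ + d := by rwa [add_assoc, add_right_inj, add_comm d] at hsum
  have hρ := h (rootWeight d) 0
  rw [rhoLM_zero_right, rhoLM_zero_right] at hρ
  obtain rfl : d = 0 :=
    eq_zero_of_pairQQ_self_sq_eq_one hr hs hrs (pairQQ_self_sq_eq_one_of_rhoLam_eq hr hs hρ)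
  simp
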